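/- Let π ∈ I_n(3412). Then the number of occurrences of the consecutive pattern 321 in π (indices i with π_i > π_{i+1} > π_{i+2}) equals the total number of occurrences in the Motzkin path Ψ(π) of the factors UU, DD and UHD. -/

import Mathlib

open scoped Classical

noncomputable section

/-- Steps of a Motzkin path: up, down, horizontal. -/
inductive Step : Type
  | U : Step
  | D : Step
  | H : Step
  deriving DecidableEq

/-- Steps of a bicolored Motzkin path: up, down, horizontal of color `c₁`,
horizontal of color `c₂`. -/
inductive CStep : Type
  | U : CStep
  | D : CStep
  | H : CStep
  | Ht : CStep
  deriving DecidableEq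

/-- A word over `{U,D,H}` is a Motzkin word if the numbers of `U`'s and `D`'s agree
and every prefix has at least as many `U`'s as `D`'s. -/
def IsMotzkin (w : List Step) : Prop :=
  w.count Step.U = w.count Step.D ∧
  ∀ k, (w.take k).count Step.D ≤ (w.take k).count Step.U

/-- The `y`-coordinate of the lattice point reached after the first `i` steps. -/
def levelAt (w : List Step) (i : ℕ) : ℕ :=
  (w.take i).count Step.U - (w.take i).count Step.D

/-- The height of the `i`-th step (0-indexed): the `y`-coordinate of its ending
point for a down step, of its starting point otherwise. -/
def heightAt (w : List Step) (i : ℕ) : ℕ :=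
  if w.getD i Step.H = Step.D then levelAt w (i + 1) else levelAt w i

/-- Twice the area between the path and the `x`-axis (trapezoid rule). -/
def twoArea (w : List Step) : ℕ :=
  ∑ i ∈ Finset.range w.length, (levelAt w i + levelAt w (i + 1))

/-- The number of occurrences of `p` as a factor (subword of consecutive letters) of `w`. -/
def occFactor (p w : List Step) : ℕ :=
  ((Finset.range w.length).filter fun i => p <+: w.drop i).card

/-- The `y`-coordinate reached after `i` steps, bicolored version. -/
def cLevelAt (w : List CStep) (i : ℕ) : ℕ :=
  (w.take i).count CStep.U - (w.take i).count CStep.D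

/-- The height of the `i`-th step, bicolored version. -/
def cHeightAt (w : List CStep) (i : ℕ) : ℕ :=
  if w.getD i CStep.H = CStep.D then cLevelAt w (i + 1) else cLevelAt w i

/-- A bicolored Motzkin word: a Motzkin word whose horizontal steps have two possible
colors (`H` and `Ht`), horizontal steps at height `0` not being allowed to have the
second color. -/
def IsBicoloredMotzkin (w : List CStep) : Prop :=
  w.count CStep.U = w.count CStep.D ∧
  (∀ k, (w.take k).count CStep.D ≤ (w.take k).count CStep.U) ∧
  (∀ i < w.length, w.getD i CStep.H = CStep.Ht → cHeightAt w i ≠ 0)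

/-- A histoire de Laguerre of length `n`: a bicolored Motzkin path of length `n`
together with a sequence `l` of nonnegative integers such that `l i ≤ h i` for each
step, the inequality being strict for the horizontal steps of the second color
(the "suitable constraints" of De Medicis and Viennot). -/
def IsLaguerre (n : ℕ) (dl : List CStep × List ℕ) : Prop :=
  dl.1.length = n ∧ dl.2.length = n ∧ IsBicoloredMotzkin dl.1 ∧
  ∀ i < n, dl.2.getD i 0 ≤ cHeightAt dl.1 i ∧
    (dl.1.getD i CStep.H = CStep.Ht → dl.2.getD i 0 < cHeightAt dl.1 i)

/-- A labelled Motzkin path of length `n`: a Motzkin path whose down steps carry a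
label not exceeding their height, all other steps carrying the label `0` (unlabelled). -/
def IsLabelledMotzkin (n : ℕ) (dl : List Step × List ℕ) : Prop :=
  dl.1.length = n ∧ dl.2.length = n ∧ IsMotzkin dl.1 ∧
  ∀ i < n, (dl.1.getD i Step.H = Step.D → dl.2.getD i 0 ≤ heightAt dl.1 i) ∧
    (dl.1.getD i Step.H ≠ Step.D → dl.2.getD i 0 = 0)

/-- The embedding of plain Motzkin steps into bicolored steps. -/
def Step.toC : Step → CStep
  | Step.U => CStep.U
  | Step.D => CStep.D
  | Step.H => CStep.H

/-- The value (as a natural number, 0-indexed) of the permutation `π` at the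
(0-indexed) position `i`; junk value `0` out of range. -/
def pv {n : ℕ} (π : Equiv.Perm (Fin n)) (i : ℕ) : ℕ :=
  if h : i < n then (π ⟨i, h⟩ : Fin n).val else 0

/-- Position `p` starts an ascending run of `π` (in one-line notation):
either `p = 0` or there is a descent just before `p`. -/
def RunStartAt {n : ℕ} (π : Equiv.Perm (Fin n)) (p : Fin n) : Prop :=
  ∀ q : Fin n, (q : ℕ) + 1 = (p : ℕ) → π p < π q

/-- Position `p` ends an ascending run of `π`. -/
def RunEndAt {n : ℕ} (π : Equiv.Perm (Fin n)) (p : Fin n) : Prop :=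
  ∀ q : Fin n, (p : ℕ) + 1 = (q : ℕ) → π q < π p

/-- The step of the bicolored Motzkin path `Γ(π)` associated with the value `v`:
`U` if `v` is a head, `D` if it is a tail, `H` if it is a head-tail, `Ht` if it
is a boarder. -/
def gammaStep {n : ℕ} (π : Equiv.Perm (Fin n)) (v : Fin n) : CStep :=
  if RunStartAt π (π.symm v) then
    if RunEndAt π (π.symm v) then CStep.H else CStep.U
  else
    if RunEndAt π (π.symm v) then CStep.D else CStep.Ht

/-- The label of `Γ(π)` at the value `v`: the number of ascending runs of `π`
(determined by the position `pq.1` of their first element and the position `pq.2`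
of their last element) whose first value is `< v`, whose last value is `> v`, and
whose last element precedes `v` in `π`. -/
def gammaLabel {n : ℕ} (π : Equiv.Perm (Fin n)) (v : Fin n) : ℕ :=
  (Finset.univ.filter fun pq : Fin n × Fin n =>
    RunStartAt π pq.1 ∧ RunEndAt π pq.2 ∧ pq.1 ≤ pq.2 ∧
    (∀ r : Fin n, pq.1 ≤ r → r < pq.2 → ¬ RunEndAt π r) ∧
    π pq.1 < v ∧ v < π pq.2 ∧ pq.2 < π.symm v).card

/-- The map `Γ` from permutations to pairs (bicolored Motzkin path, label sequence). -/
def Gamma {n : ℕ} (π : Equiv.Perm (Fin n)) : List CStep × List ℕ :=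
  (List.ofFn fun v => gammaStep π v, List.ofFn fun v => gammaLabel π v)

/-- The (uncolored) Motzkin path `Γ(π)` for permutations with no boarders:
`U` for heads, `D` for tails, `H` for head-tails. -/
def gammaPath {n : ℕ} (π : Equiv.Perm (Fin n)) : List Step :=
  List.ofFn fun v : Fin n =>
    if RunStartAt π (π.symm v) then
      if RunEndAt π (π.symm v) then Step.H else Step.U
    else
      if RunEndAt π (π.symm v) then Step.D else Step.H

/-- `π` is an involution. -/
def IsInvolution {n : ℕ} (π : Equiv.Perm (Fin n)) : Prop :=
  ∀ x, π (π x) = x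

/-- The Motzkin path `Ψ(π)` of an involution `π`: `H` at fixed points, `U` at the
smaller element of a 2-cycle, `D` at the larger element of a 2-cycle. -/
def psiWord {n : ℕ} (π : Equiv.Perm (Fin n)) : List Step :=
  List.ofFn fun v : Fin n =>
    if π v = v then Step.H else if v < π v then Step.U else Step.D

/-- The label of `Ψ(π)` at `v`: if `v` is the larger element of a 2-cycle
`(π v, v)`, the number of 2-cycles `(x, π x)` with `π v < x < v < π x`; `0` otherwise. -/
def psiLabel {n : ℕ} (π : Equiv.Perm (Fin n)) (v : Fin n) : ℕ :=
  if π v < v then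
    (Finset.univ.filter fun x : Fin n => π v < x ∧ x < v ∧ v < π x).card
  else 0

/-- The map `Ψ` from involutions to labelled Motzkin paths. -/
def Psi {n : ℕ} (π : Equiv.Perm (Fin n)) : List Step × List ℕ :=
  (psiWord π, List.ofFn fun v => psiLabel π v)

/-- Number of inversions of `π`. -/
def invCount {n : ℕ} (π : Equiv.Perm (Fin n)) : ℕ :=
  (Finset.univ.filter fun p : Fin n × Fin n => p.1 < p.2 ∧ π p.2 < π p.1).card

/-- Number of coinversions of `π`. -/
def coinvCount {n : ℕ} (π : Equiv.Perm (Fin n)) : ℕ :=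
  (Finset.univ.filter fun p : Fin n × Fin n => p.1 < p.2 ∧ π p.1 < π p.2).card

/-- Number of descents of `π`. -/
def desCount {n : ℕ} (π : Equiv.Perm (Fin n)) : ℕ :=
  ((Finset.range (n - 1)).filter fun i => pv π (i + 1) < pv π i).card

/-- Number of ascents of `π`. -/
def ascCount {n : ℕ} (π : Equiv.Perm (Fin n)) : ℕ :=
  ((Finset.range (n - 1)).filter fun i => pv π i < pv π (i + 1)).card

/-- Number of fixed points of `π`. -/
def fixCount {n : ℕ} (π : Equiv.Perm (Fin n)) : ℕ :=
  (Finset.univ.filter fun i : Fin n => π i = i).card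

/-- Number of occurrences of the consecutive pattern 123 in `π`. -/
def occC123 {n : ℕ} (π : Equiv.Perm (Fin n)) : ℕ :=
  ((Finset.range (n - 2)).filter fun i =>
    pv π i < pv π (i + 1) ∧ pv π (i + 1) < pv π (i + 2)).card

/-- Number of occurrences of the consecutive pattern 132 in `π`. -/
def occC132 {n : ℕ} (π : Equiv.Perm (Fin n)) : ℕ :=
  ((Finset.range (n - 2)).filter fun i =>
    pv π i < pv π (i + 2) ∧ pv π (i + 2) < pv π (i + 1)).card

/-- Number of occurrences of the consecutive pattern 213 in `π`. -/
def occC213 {n : ℕ} (π : Equiv.Perm (Fin n)) : ℕ :=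
  ((Finset.range (n - 2)).filter fun i =>
    pv π (i + 1) < pv π i ∧ pv π i < pv π (i + 2)).card

/-- Number of occurrences of the consecutive pattern 231 in `π`. -/
def occC231 {n : ℕ} (π : Equiv.Perm (Fin n)) : ℕ :=
  ((Finset.range (n - 2)).filter fun i =>
    pv π (i + 2) < pv π i ∧ pv π i < pv π (i + 1)).card

/-- Number of occurrences of the consecutive pattern 312 in `π`. -/
def occC312 {n : ℕ} (π : Equiv.Perm (Fin n)) : ℕ :=
  ((Finset.range (n - 2)).filter fun i =>
    pv π (i + 1) < pv π (i + 2) ∧ pv π (i + 2) < pv π i).card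

/-- Number of occurrences of the consecutive pattern 321 in `π`. -/
def occC321 {n : ℕ} (π : Equiv.Perm (Fin n)) : ℕ :=
  ((Finset.range (n - 2)).filter fun i =>
    pv π (i + 2) < pv π (i + 1) ∧ pv π (i + 1) < pv π i).card

/-- `π` contains the classical pattern 132. -/
def Contains132 {n : ℕ} (π : Equiv.Perm (Fin n)) : Prop :=
  ∃ i j k : Fin n, i < j ∧ j < k ∧ π i < π k ∧ π k < π j

/-- `π` contains the consecutive pattern 123. -/
def ContainsC123 {n : ℕ} (π : Equiv.Perm (Fin n)) : Prop :=
  ∃ i j k : Fin n, (i : ℕ) + 1 = (j : ℕ) ∧ (j : ℕ) + 1 = (k : ℕ) ∧ π i < π j ∧ π j < π k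

/-- `π` contains the classical pattern 3412. -/
def Contains3412 {n : ℕ} (π : Equiv.Perm (Fin n)) : Prop :=
  ∃ i₁ i₂ i₃ i₄ : Fin n, i₁ < i₂ ∧ i₂ < i₃ ∧ i₃ < i₄ ∧
    π i₃ < π i₄ ∧ π i₄ < π i₁ ∧ π i₁ < π i₂

/-- `π` contains the vincular pattern 1-2̲3̲. -/
def Contains1_23 {n : ℕ} (π : Equiv.Perm (Fin n)) : Prop :=
  ∃ i j k : Fin n, i < j ∧ (j : ℕ) + 1 = (k : ℕ) ∧ π i < π j ∧ π j < π k

/-- `π` contains the vincular pattern 1-3̲2̲. -/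
def Contains1_32 {n : ℕ} (π : Equiv.Perm (Fin n)) : Prop :=
  ∃ i j k : Fin n, i < j ∧ (j : ℕ) + 1 = (k : ℕ) ∧ π i < π k ∧ π k < π j

/-- `w` is the one-line notation of a permutation of `{0, …, n-1}`. -/
def IsPermWord (n : ℕ) (w : List ℕ) : Prop :=
  List.Perm w (List.range n)

/-- Position `p` starts an ascending run of the word `w`. -/
def wRunStart (w : List ℕ) (p : ℕ) : Prop :=
  p = 0 ∨ w.getD p 0 < w.getD (p - 1) 0

/-- Position `p` ends an ascending run of the word `w`. -/
def wRunEnd (w : List ℕ) (p : ℕ) : Prop :=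
  p + 1 = w.length ∨ w.getD (p + 1) 0 < w.getD p 0

/-- The step of `Γ(w)` associated with the value `v`. -/
def wGammaStep (w : List ℕ) (v : ℕ) : CStep :=
  if wRunStart w (w.idxOf v) then
    if wRunEnd w (w.idxOf v) then CStep.H else CStep.U
  else
    if wRunEnd w (w.idxOf v) then CStep.D else CStep.Ht

/-- The label of `Γ(w)` at the value `v`. -/
def wGammaLabel (w : List ℕ) (v : ℕ) : ℕ :=
  ((Finset.range w.length ×ˢ Finset.range w.length).filter fun pq =>
    wRunStart w pq.1 ∧ wRunEnd w pq.2 ∧ pq.1 ≤ pq.2 ∧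
    (∀ r, pq.1 ≤ r → r < pq.2 → ¬ wRunEnd w r) ∧
    w.getD pq.1 0 < v ∧ v < w.getD pq.2 0 ∧ pq.2 < w.idxOf v).card

/-- The map `Γ` on one-line words. -/
def wGamma (w : List ℕ) : List CStep × List ℕ :=
  ((List.range w.length).map (wGammaStep w), (List.range w.length).map (wGammaLabel w))

/-- The word `w` contains the vincular pattern 1-2̲3̲. -/
def wContains1_23 (w : List ℕ) : Prop :=
  ∃ i j, i < j ∧ j + 1 < w.length ∧
    w.getD i 0 < w.getD j 0 ∧ w.getD j 0 < w.getD (j + 1) 0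

/-- The word `w` contains the vincular pattern 1-3̲2̲. -/
def wContains1_32 (w : List ℕ) : Prop :=
  ∃ i j, i < j ∧ j + 1 < w.length ∧
    w.getD i 0 < w.getD (j + 1) 0 ∧ w.getD (j + 1) 0 < w.getD j 0

/-- The word `w` contains the classical pattern 132. -/
def wContains132 (w : List ℕ) : Prop :=
  ∃ i j k, i < j ∧ j < k ∧ k < w.length ∧
    w.getD i 0 < w.getD k 0 ∧ w.getD k 0 < w.getD j 0

/-- The word `w` contains the consecutive pattern 123. -/
def wContainsC123 (w : List ℕ) : Prop :=
  ∃ i, i + 2 < w.length ∧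
    w.getD i 0 < w.getD (i + 1) 0 ∧ w.getD (i + 1) 0 < w.getD (i + 2) 0

/-- The one-line word of the Foata image `F(π)` of an involution `π`: write `π` in
standard cycle notation (each cycle with its least element first, cycles in
decreasing order of their least elements) and erase the parentheses. -/
def foataWord {n : ℕ} (π : Equiv.Perm (Fin n)) : List ℕ :=
  (((List.range n).reverse).map fun m =>
    if pv π m = m then [m]
    else if m < pv π m then [m, pv π m]
    else ([] : List ℕ)).flatten

/-- The number of long tunnels of `d`: occurrences of factors `U α D` with `α` a
nonempty Motzkin word. -/
def longTunnelCount (d : List Step) : ℕ :=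
  ((Finset.range d.length ×ˢ Finset.range d.length).filter fun ij =>
    ij.1 + 1 < ij.2 ∧ d.getD ij.1 Step.H = Step.U ∧ d.getD ij.2 Step.H = Step.D ∧
    IsMotzkin ((d.drop (ij.1 + 1)).take (ij.2 - ij.1 - 1))).card

/-- The number of weak valleys of `d`: occurrences of the factors `HH, HU, DH, DU`. -/
def weakValleyCount (d : List Step) : ℕ :=
  occFactor [Step.H, Step.H] d + occFactor [Step.H, Step.U] d +
  occFactor [Step.D, Step.H] d + occFactor [Step.D, Step.U] d

end

/-! Read an involution as the set of arcs `(i, π i)`; avoiding 3412 means that no two arcs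
cross. Hence `a` is a descent of `π` exactly when `Ψ(π)` has `U` at `a` or `D` at `a + 1`:
an ascent there would make the arcs at `a` and `a + 1` cross. An occurrence of 321 at `i` is
a descent at both `i` and `i + 1`, and sorting these cases by the letter at `i + 1` leaves
exactly the factors `UU` at `i`, `DD` at `i + 1` and `UHD` at `i`. -/

theorem List.cons_prefix_drop_iff {α : Type*} (a : α) (p l : List α) (i : ℕ) :
    a :: p <+: l.drop i ↔ l[i]? = some a ∧ p <+: l.drop (i + 1) := by
  by_cases hi : i < l.length
  · rw [List.drop_eq_getElem_cons hi, List.cons_prefix_cons, List.getElem?_eq_getElem hi,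
      Option.some_inj, eq_comm]
  · simp [List.drop_eq_nil_of_le (not_lt.mp hi), List.getElem?_eq_none (not_lt.mp hi)]

open Finset

section Involution

variable {n : ℕ} {π : Equiv.Perm (Fin n)}

theorem pv_eq_zero_of_le {i : ℕ} (hi : n ≤ i) : pv π i = 0 :=
  dif_neg hi.not_gt

theorem lt_of_pv_ne_zero {i : ℕ} (h : pv π i ≠ 0) : i < n := by
  by_contra hi
  exact h (pv_eq_zero_of_le (not_lt.mp hi))

theorem pv_lt {i : ℕ} (hi : i < n) : pv π i < n := by
  rw [pv, dif_pos hi]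
  exact Fin.isLt _

theorem IsInvolution.pv_pv (hπ : IsInvolution π) {i : ℕ} (hi : i < n) :
    pv π (pv π i) = i := by
  simp [pv, hi, hπ _]

theorem contains3412_of_crossing (hπ : IsInvolution π) {x y : ℕ} (hxy : x < y)
    (hy : y < pv π x) (hcross : pv π x < pv π y) : Contains3412 π := by
  have hx : x < n := lt_of_pv_ne_zero (π := π) (by omega)
  have hy' : y < n := lt_of_pv_ne_zero (π := π) (by omega)
  simp only [pv, hx, hy', dif_pos] at hy hcross
  refine ⟨⟨x, hx⟩, ⟨y, hy'⟩, π ⟨x, hx⟩, π ⟨y, hy'⟩, ?_, ?_, ?_, ?_, ?_, ?_⟩ <;>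
    simp only [Fin.lt_def, hπ _] <;> assumption

theorem pv_succ_lt_pv_iff (hπ : IsInvolution π) (h3412 : ¬ Contains3412 π) {a : ℕ}
    (ha : a + 1 < n) :
    pv π (a + 1) < pv π a ↔ a < pv π a ∨ pv π (a + 1) < a + 1 := by
  have h₀ := hπ.pv_pv (i := a) (by omega)
  have h₁ := hπ.pv_pv ha
  constructor
  · intro h
    omega
  · intro h
    by_contra hle
    rcases h with hup | hdown
    · exact h3412 (contains3412_of_crossing hπ (Nat.lt_succ_self a) (by grind) (by grind))
    · exact h3412 (contains3412_of_crossing hπ (x := pv π a) (y := pv π (a + 1))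
        (by grind) (by grind) (by grind))

end Involution

section PsiWord

variable {n : ℕ} (π : Equiv.Perm (Fin n))

theorem length_psiWord : (psiWord π).length = n := List.length_ofFn

theorem psiWord_getElem? (i : ℕ) : (psiWord π)[i]? =
    if i < n then some (if pv π i = i then Step.H else if i < pv π i then Step.U else Step.D)
    else none := by
  by_cases hi : i < n
  · simp only [psiWord, List.getElem?_ofFn, pv, dif_pos hi, if_pos hi, Fin.ext_iff, Fin.lt_def]
  · simp only [psiWord, List.getElem?_ofFn, dif_neg hi, if_neg hi]

theorem psiWord_getElem?_eq_U {i : ℕ} : (psiWord π)[i]? = some Step.U ↔ i < pv π i := by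
  rw [psiWord_getElem?]
  split_ifs <;> simp_all [pv_eq_zero_of_le]

theorem psiWord_getElem?_eq_H {i : ℕ} :
    (psiWord π)[i]? = some Step.H ↔ i < n ∧ pv π i = i := by
  rw [psiWord_getElem?]
  split_ifs <;> simp_all

theorem psiWord_getElem?_eq_D {i : ℕ} :
    (psiWord π)[i]? = some Step.D ↔ i < n ∧ pv π i < i := by
  rw [psiWord_getElem?]
  split_ifs <;> simp_all <;> omega

theorem occFactor_UU_psiWord :
    occFactor [Step.U, Step.U] (psiWord π) =
      #{i ∈ range (n - 2) | i < pv π i ∧ i + 1 < pv π (i + 1)} := by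
  rw [occFactor, length_psiWord]
  congr 1
  ext i
  have hbound := pv_lt (π := π) (i := i + 1)
  simp only [mem_filter, mem_range, List.cons_prefix_drop_iff, List.nil_prefix, and_true,
    psiWord_getElem?_eq_U]
  constructor
  · rintro ⟨hi, h0, h1⟩
    have : i + 1 < n := lt_of_pv_ne_zero (π := π) (by omega)
    omega
  · omega

theorem occFactor_DD_psiWord :
    occFactor [Step.D, Step.D] (psiWord π) =
      #{i ∈ range (n - 2) | pv π (i + 1) < i + 1 ∧ pv π (i + 2) < i + 2} := by
  rw [occFactor, length_psiWord]
  simp only [List.cons_prefix_drop_iff, List.nil_prefix, and_true, psiWord_getElem?_eq_D]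
  refine (card_nbij' (· + 1) (· - 1) ?_ ?_ ?_ ?_).symm
  · intro i hi
    simp only [mem_coe, mem_filter, mem_range, add_assoc, Nat.reduceAdd] at hi ⊢
    omega
  · rintro (_ | i) hi
    · simp at hi
    · simp only [mem_coe, mem_filter, mem_range, add_assoc, Nat.reduceAdd,
        Nat.add_sub_cancel] at hi ⊢
      omega
  · intro i _
    simp
  · rintro (_ | i) hi
    · simp at hi
    · simp

theorem occFactor_UHD_psiWord :
    occFactor [Step.U, Step.H, Step.D] (psiWord π) =
      #{i ∈ range (n - 2) | i < pv π i ∧ pv π (i + 1) = i + 1 ∧ pv π (i + 2) < i + 2} := by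
  rw [occFactor, length_psiWord]
  congr 1
  ext i
  simp only [mem_filter, mem_range, List.cons_prefix_drop_iff, List.nil_prefix, and_true,
    psiWord_getElem?_eq_U, psiWord_getElem?_eq_H, psiWord_getElem?_eq_D, add_assoc,
    Nat.reduceAdd]
  omega

end PsiWord

theorem occC321_eq_card_filter {n : ℕ} {π : Equiv.Perm (Fin n)} (hπ : IsInvolution π)
    (h3412 : ¬ Contains3412 π) :
    occC321 π = #{i ∈ range (n - 2) | (i < pv π i ∧ i + 1 < pv π (i + 1)) ∨
      (pv π (i + 1) < i + 1 ∧ pv π (i + 2) < i + 2) ∨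
      (i < pv π i ∧ pv π (i + 1) = i + 1 ∧ pv π (i + 2) < i + 2)} := by
  refine congrArg card (filter_congr fun i hi => ?_)
  rw [mem_range] at hi
  have h₀ := pv_succ_lt_pv_iff hπ h3412 (a := i) (by omega)
  have h₁ := pv_succ_lt_pv_iff hπ h3412 (a := i + 1) (by omega)
  simp only [add_assoc, Nat.reduceAdd] at h₁
  rw [h₀, h₁]
  omega

/-- For `π ∈ I_n(3412)`: the number of occurrences of the
consecutive pattern 321 in `π` equals the total number of occurrences in `Ψ(π)` of
the factors `UU`, `DD` and `UHD`. -/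
theorem occC321_eq_factors (n : ℕ) (π : Equiv.Perm (Fin n))
    (h₁ : IsInvolution π) (h₂ : ¬ Contains3412 π) :
    occC321 π =
      occFactor [Step.U, Step.U] (psiWord π) +
      occFactor [Step.D, Step.D] (psiWord π) +
      occFactor [Step.U, Step.H, Step.D] (psiWord π) := by
  rw [occC321_eq_card_filter h₁ h₂]
  simp only [filter_or]
  rw [card_union_of_disjoint, card_union_of_disjoint, occFactor_UU_psiWord,
    occFactor_DD_psiWord, occFactor_UHD_psiWord, add_assoc]
  all_goals
    simp only [disjoint_left, mem_union, mem_filter]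
    omega
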